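/- For every pair of positive integers A and n, there exist unique integers δ and a_n > a_{n−1} > ... > a_δ, with 1 ≤ δ ≤ n and a_j ≥ j for every j with δ ≤ j ≤ n, such that A = C(a_n, n) + C(a_{n−1}, n−1) + ... + C(a_δ, δ). -/

import Mathlib

/-- Binomial coefficient with the convention `C(a, b) = 0` whenever `b = 0`
(the convention `C(a, b) = 0` for `a < b` is already built into `Nat.choose`). -/
def mchoose (a b : ℕ) : ℕ := if b = 0 then 0 else Nat.choose a b

/-- `IsMacaulayRep A n δ c` says that
`A = C(c n, n) + C(c (n-1), n-1) + ⋯ + C(c δ, δ)` is the `n`-th Macaulay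
representation of `A`, i.e. `1 ≤ δ ≤ n`, `c j ≥ j` for `δ ≤ j ≤ n`, and the
`c j` are strictly increasing in `j` on `[δ, n]`. -/
def IsMacaulayRep (A n δ : ℕ) (c : ℕ → ℕ) : Prop :=
  1 ≤ δ ∧ δ ≤ n ∧ (∀ j, δ ≤ j → j ≤ n → j ≤ c j) ∧
    (∀ j, δ ≤ j → j < n → c j < c (j + 1)) ∧
    A = ∑ j ∈ Finset.Icc δ n, Nat.choose (c j) j

/-- `IsMacaulayLower A n v` says that `v = A_{<n>} = C(a_n - 1, n) + ⋯ + C(a_δ - 1, δ)`,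
computed from the `n`-th Macaulay representation of `A`, with the convention `0_{<n>} = 0`. -/
def IsMacaulayLower (A n v : ℕ) : Prop :=
  (A = 0 ∧ v = 0) ∨
    ∃ δ c, IsMacaulayRep A n δ c ∧ v = ∑ j ∈ Finset.Icc δ n, Nat.choose (c j - 1) j

/-- `IsMacaulayMinus A n v` says that `v = A^{-<n>} = C(a_n - 1, n-1) + ⋯ + C(a_δ - 1, δ-1)`,
computed from the `n`-th Macaulay representation of `A`, with the convention `0^{-<n>} = 0`
(and `C(a, 0) = 0`). -/
def IsMacaulayMinus (A n v : ℕ) : Prop :=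
  (A = 0 ∧ v = 0) ∨
    ∃ δ c, IsMacaulayRep A n δ c ∧ v = ∑ j ∈ Finset.Icc δ n, mchoose (c j - 1) (j - 1)

/-- `IsMacaulayUpper A n v` says that `v = A^{<n>} = C(a_n + 1, n+1) + ⋯ + C(a_δ + 1, δ+1)`,
computed from the `n`-th Macaulay representation of `A`, with the convention `0^{<n>} = 0`. -/
def IsMacaulayUpper (A n v : ℕ) : Prop :=
  (A = 0 ∧ v = 0) ∨
    ∃ δ c, IsMacaulayRep A n δ c ∧ v = ∑ j ∈ Finset.Icc δ n, Nat.choose (c j + 1) (j + 1)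

/-!
The top coefficient of a Macaulay representation of `A` in degree `n` is pinned down by
`C(a_n, n) ≤ A < C(a_n + 1, n)`. The lower bound is one summand; the upper bound follows by
induction on `n` from Pascal's rule `C(a_n + 1, n) = C(a_n, n) + C(a_n, n - 1)`, because the
remaining terms form a representation of `A - C(a_n, n)` in degree `n - 1` with top coefficient
below `a_n`. Conversely, the greedy choice of `a_n` leaves a remainder below `C(a_n, n - 1)`, so its
representation in degree `n - 1` has top coefficient below `a_n`. Peeling off the top term thus gives
existence and uniqueness by induction on `n`.
-/

open Finset

lemma Nat.exists_choose_le_lt_choose_succ (A k : ℕ) :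
    ∃ a, a.choose (k + 1) ≤ A ∧ A < (a + 1).choose (k + 1) := by
  have hex : ∃ a : ℕ, A < a.choose (k + 1) := by
    refine ⟨A + (k + 1), ?_⟩
    calc A < (A + 1).choose A := by rw [Nat.choose_succ_self_right]; omega
      _ ≤ (A + (k + 1)).choose A := Nat.choose_le_choose _ (by omega)
      _ = (A + (k + 1)).choose (k + 1) := Nat.choose_symm_add
  have hpos : Nat.find hex ≠ 0 := fun h0 => by simpa [h0] using Nat.find_spec hex
  obtain ⟨a, ha⟩ := Nat.exists_eq_add_one_of_ne_zero hpos
  refine ⟨a, not_lt.1 (Nat.find_min hex (by omega)), ?_⟩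
  simpa [ha] using Nat.find_spec hex

namespace IsMacaulayRep

variable {A B n δ a : ℕ} {c c' : ℕ → ℕ}

lemma choose_top_le (h : IsMacaulayRep A n δ c) : (c n).choose n ≤ A := by
  obtain ⟨-, hδn, -, -, rfl⟩ := h
  exact single_le_sum (f := fun j => (c j).choose j) (fun _ _ => Nat.zero_le _)
    (mem_Icc.2 ⟨hδn, le_rfl⟩)

lemma eq_top_iff (h : IsMacaulayRep A n δ c) : δ = n ↔ A = (c n).choose n := by
  obtain ⟨-, hδn, hle, -, rfl⟩ := h
  refine ⟨fun hδ => by rw [hδ, Icc_self, sum_singleton], fun hA => ?_⟩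
  by_contra hδ
  refine hA.not_gt ?_
  exact single_lt_sum (f := fun j => (c j).choose j) hδ (mem_Icc.2 ⟨hδn, le_rfl⟩)
    (mem_Icc.2 ⟨le_rfl, hδn⟩) (Nat.choose_pos (hle δ le_rfl hδn)) fun _ _ _ => Nat.zero_le _

lemma tail (h : IsMacaulayRep A (n + 1) δ c) (hδ : δ ≤ n) :
    IsMacaulayRep (A - (c (n + 1)).choose (n + 1)) n δ c := by
  obtain ⟨hδ1, -, hle, hlt, rfl⟩ := h
  refine ⟨hδ1, hδ, fun j hj hjn => hle j hj (by omega), fun j hj hjn => hlt j hj (by omega), ?_⟩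
  rw [sum_Icc_succ_top (by omega), Nat.add_sub_cancel]

lemma lt_choose_succ_top (h : IsMacaulayRep A n δ c) : A < (c n + 1).choose n := by
  induction n generalizing A with
  | zero => exact absurd (h.1.trans h.2.1) (by omega)
  | succ n ih =>
    have ⟨_, hδn, hle, hlt, _⟩ := h
    rw [Nat.choose_succ_succ']
    rcases hδn.lt_or_eq with hδ | hδ
    · have hB := ih (h.tail (Nat.lt_succ_iff.1 hδ))
      have := h.choose_top_le
      have : (c n + 1).choose n ≤ (c (n + 1)).choose n :=
        Nat.choose_le_choose n (hlt n (by omega) (Nat.lt_succ_self n))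
      omega
    · rw [h.eq_top_iff.1 hδ, lt_add_iff_pos_left]
      exact Nat.choose_pos (by have := hle (n + 1) hδn le_rfl; omega)

lemma top_eq (h : IsMacaulayRep A n δ c) (h' : IsMacaulayRep A n δ' c') : c n = c' n := by
  have hmono := Nat.choose_mono n
  refine le_antisymm (Nat.lt_succ_iff.1 (hmono.reflect_lt ?_))
    (Nat.lt_succ_iff.1 (hmono.reflect_lt ?_))
  · exact h.choose_top_le.trans_lt h'.lt_choose_succ_top
  · exact h'.choose_top_le.trans_lt h.lt_choose_succ_top

lemma unique (h : IsMacaulayRep A n δ c) (h' : IsMacaulayRep A n δ' c') :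
    δ = δ' ∧ ∀ j, δ ≤ j → j ≤ n → c j = c' j := by
  induction n generalizing A with
  | zero => exact absurd (h.1.trans h.2.1) (by omega)
  | succ n ih =>
    have htop := h.top_eq h'
    have hδ : δ = n + 1 ↔ δ' = n + 1 := by rw [h.eq_top_iff, h'.eq_top_iff, htop]
    by_cases hδn : δ = n + 1
    · refine ⟨hδn.trans (hδ.1 hδn).symm, fun j hj hjn => ?_⟩
      obtain rfl : j = n + 1 := by omega
      exact htop
    · have hδ' : δ' ≤ n := by have := h'.2.1; omega
      obtain ⟨rfl, hc⟩ := ih (h.tail (by have := h.2.1; omega)) (htop ▸ h'.tail hδ')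
      refine ⟨rfl, fun j hj hjn => ?_⟩
      rcases Nat.le_succ_iff.1 hjn with hjn | rfl
      · exact hc j hj hjn
      · exact htop

lemma cons (h : IsMacaulayRep B n δ c) (ha : c n < a) :
    IsMacaulayRep (B + a.choose (n + 1)) (n + 1) δ (Function.update c (n + 1) a) := by
  obtain ⟨hδ1, hδn, hle, hlt, rfl⟩ := h
  have hc : ∀ j ≤ n, Function.update c (n + 1) a j = c j :=
    fun j hj => Function.update_of_ne (by omega) _ _
  refine ⟨hδ1, by omega, fun j hj hjn => ?_, fun j hj hjn => ?_, ?_⟩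
  · rcases Nat.le_succ_iff.1 hjn with hjn | rfl
    · rw [hc j hjn]; exact hle j hj hjn
    · have := hle n hδn le_rfl
      rw [Function.update_self]; omega
  · rw [hc j (by omega)]
    rcases Nat.lt_succ_iff_lt_or_eq.1 hjn with hjn | rfl
    · rw [hc (j + 1) hjn]; exact hlt j hj hjn
    · rwa [Function.update_self]
  · rw [sum_Icc_succ_top (by omega), Function.update_self]
    exact congrArg (· + _) (sum_congr rfl fun j hj => by rw [hc j (mem_Icc.1 hj).2])

end IsMacaulayRep

lemma isMacaulayRep_single {n a : ℕ} (hn : 1 ≤ n) (ha : n ≤ a) :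
    IsMacaulayRep (a.choose n) n n fun _ => a :=
  ⟨hn, le_rfl, fun _ _ hj => hj.trans ha, fun _ hj hjn => absurd hj (by omega), by simp⟩

theorem exists_isMacaulayRep {A n : ℕ} (hA : 1 ≤ A) (hn : 1 ≤ n) :
    ∃ δ c, IsMacaulayRep A n δ c := by
  induction n, hn using Nat.le_induction generalizing A with
  | base => exact ⟨1, _, by simpa using isMacaulayRep_single le_rfl hA⟩
  | succ n hn ih =>
    obtain ⟨a, haA, hAa⟩ := Nat.exists_choose_le_lt_choose_succ A n
    rw [Nat.choose_succ_succ'] at hAa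
    rcases Nat.eq_zero_or_pos (A - a.choose (n + 1)) with hB | hB
    · have hA' : A = a.choose (n + 1) := by omega
      refine ⟨n + 1, _, hA' ▸ isMacaulayRep_single (by omega) ?_⟩
      by_contra ha
      rw [Nat.choose_eq_zero_of_lt (by omega)] at hA'
      omega
    · obtain ⟨δ, c, h⟩ := ih hB
      have ha : c n < a := (Nat.choose_mono n).reflect_lt (h.choose_top_le.trans_lt (by omega))
      exact ⟨δ, _, Nat.sub_add_cancel haA ▸ h.cons ha⟩

/-- **Existence and uniqueness of the `n`-th Macaulay representation.**
For all positive integers `A` and `n` there exist unique `δ` with `1 ≤ δ ≤ n` and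
integers `a_n > a_(n-1) > ⋯ > a_δ` with `a_j ≥ j` for `δ ≤ j ≤ n`, such that
`A = C(a_n, n) + C(a_(n-1), n-1) + ⋯ + C(a_δ, δ)`. -/
theorem macaulay_rep_exists_unique (A n : ℕ) (hA : 1 ≤ A) (hn : 1 ≤ n) :
    (∃ δ c, IsMacaulayRep A n δ c) ∧
    (∀ δ c δ' c', IsMacaulayRep A n δ c → IsMacaulayRep A n δ' c' →
      δ = δ' ∧ ∀ j, δ ≤ j → j ≤ n → c j = c' j) :=
  ⟨exists_isMacaulayRep hA hn, fun _ _ _ _ h h' => h.unique h'⟩
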